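/- arXiv:2308.05067 — 7 statements merged into one kernel-verified Lean document; each statement's English description precedes it below -/
import Mathlib

section
/- For the continuous ski rental problem where Alice buys at time T sampled from density π(t) = e^t/(e-1) on [0,1], the adversary stops at time x, and the algorithm pays 1+T if T ≤ x and x otherwise (with opt = x), the maximum over x ∈ [0,1] of the probability that the algorithm's cost is at least 2x (i.e., P[T ≤ x and 1+T ≥ 2x]) equals 1/(√e + 1), achieved at x = 1/2. -/
lemma hval (x : ℝ) :
    (∫ t in (max 0 (2*x - 1))..x, Real.exp t / (Real.exp 1 - 1))
      = (Real.exp x - Real.exp (max 0 (2*x - 1))) / (Real.exp 1 - 1) := by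
  rw [intervalIntegral.integral_div, integral_exp]

lemma sqrt_e : Real.sqrt (Real.exp 1) = Real.exp (1/2) := by
  have : Real.exp 1 = Real.exp (1/2) * Real.exp (1/2) := by
    rw [← Real.exp_add]; norm_num
  rw [this, Real.sqrt_mul_self (Real.exp_nonneg _)]

/-- Continuous ski rental: T has density e^t/(e-1) on [0,1]; h x is the probability that
the algorithm's cost is at least 2x, i.e. P[T ≤ x and 1 + T ≥ 2x]. The maximum of h over
[0,1] is 1/(√e + 1), achieved at x = 1/2. -/
theorem stmt_0 (h : ℝ → ℝ)
    (hh : ∀ x : ℝ, h x = ∫ t in (max 0 (2*x - 1))..x, Real.exp t / (Real.exp 1 - 1)) :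
    IsMaxOn h (Set.Icc (0:ℝ) 1) (1/2) ∧
    h (1/2) = 1 / (Real.sqrt (Real.exp 1) + 1) := by
  have he1 : (1:ℝ) < Real.exp 1 := by
    have := Real.exp_one_gt_d9; linarith
  have hpos : (0:ℝ) < Real.exp 1 - 1 := by linarith
  have hhalf : h (1/2) = (Real.exp (1/2) - 1) / (Real.exp 1 - 1) := by
    rw [hh, hval]
    norm_num
  have hsq : Real.exp (1/2) * Real.exp (1/2) = Real.exp 1 := by
    rw [← Real.exp_add]; norm_num
  have he2 : Real.exp (1/2) ≤ 2 := by
    nlinarith [Real.exp_one_lt_d9, Real.exp_pos (1/2:ℝ)]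
  constructor
  · intro x hx
    simp only [Set.mem_Icc] at hx
    simp only [Set.mem_setOf_eq, hh, hval, hhalf]
    rw [div_le_div_iff_of_pos_right hpos]
    have hm : max (0:ℝ) (2*(1/2:ℝ)-1) = 0 := by norm_num
    rw [hm, Real.exp_zero]
    rcases le_or_gt x (1/2) with hc | hc
    · rw [max_eq_left (by linarith)]
      have := Real.exp_le_exp.mpr (show x ≤ 1/2 by linarith)
      rw [Real.exp_zero]; linarith
    · rw [max_eq_right (by linarith)]
      -- need exp x - exp (2x-1) ≤ exp (1/2) - 1
      have hu : Real.exp x = Real.exp (1/2) * Real.exp (x - 1/2) := by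
        rw [← Real.exp_add]; ring_nf
      have h2 : Real.exp (2*x - 1) = Real.exp (x - 1/2) * Real.exp (x - 1/2) := by
        rw [← Real.exp_add]; ring_nf
      have hu1 : (1:ℝ) ≤ Real.exp (x - 1/2) := by
        exact Real.one_le_exp (by linarith)
      nlinarith [Real.exp_pos (x - 1/2)]
  · rw [hhalf, sqrt_e]
    rw [eq_div_iff (by positivity)]
    field_simp
    nlinarith
end

section
/- Let f put probability ε on day n−1 and 1−ε on day n (and 0 elsewhere), with 0 < ε < 1. Then α_f(x) = 1 for x ≤ n−2, α_f(n−1) = 1 + ε, and α_f(n) = (1−ε)(2 − 1/n) + ε(2 − 2/n) = 2 − 1/n − ε/n; hence for 0 < ε < 1 − 1/n, max_x α_f(x) < 2 − 1/n. -/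
/-- For f putting mass ε on day n−1 and 1−ε on day n: α_f(x) = 1 for x ≤ n−2,
α_f(n−1) = 1 + ε, α_f(n) = 2 − 1/n − ε/n; hence for 0 < ε < 1 − 1/n,
max_x α_f(x) < 2 − 1/n. -/
theorem stmt_7 (n : ℕ) (hn : 3 ≤ n) (ε : ℝ) (hε : 0 < ε) (hε1 : ε < 1)
    (f : ℕ → ℝ) (hf : ∀ t, f t = if t = n then 1 - ε else if t = n - 1 then ε else 0)
    (A : ℕ → ℝ)
    (hA : ∀ x, A x = ∑ t ∈ Finset.Icc 1 x, (((n:ℝ) + t - 1) / x) * f t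
        + 1 - ∑ t ∈ Finset.Icc 1 x, f t) :
    (∀ x, 1 ≤ x → x ≤ n - 2 → A x = 1) ∧
    A (n - 1) = 1 + ε ∧
    A n = 2 - 1/(n:ℝ) - ε/(n:ℝ) ∧
    (ε < 1 - 1/(n:ℝ) → ∀ x ∈ Finset.Icc 1 n, A x < 2 - 1/(n:ℝ)) := by
  have hne : n - 1 ≠ n := by omega
  have key : ∀ (x : ℕ) (g : ℕ → ℝ), ∑ t ∈ Finset.Icc 1 x, g t * f t
      = (if n ∈ Finset.Icc 1 x then g n * (1 - ε) else 0)
      + (if n - 1 ∈ Finset.Icc 1 x then g (n - 1) * ε else 0) := by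
    intro x g
    have : ∀ t ∈ Finset.Icc 1 x, g t * f t
        = (if t = n then g t * (1 - ε) else 0) + (if t = n - 1 then g t * ε else 0) := by
      intro t _
      rw [hf t]
      by_cases h1 : t = n
      · subst h1
        simp [Ne.symm hne]
      · by_cases h2 : t = n - 1
        · subst h2
          simp [h1, hne]
        · simp [h1, h2]
    rw [Finset.sum_congr rfl this, Finset.sum_add_distrib,
      Finset.sum_ite_eq' _ n (fun t => g t * (1 - ε)),
      Finset.sum_ite_eq' _ (n - 1) (fun t => g t * ε)]
  have keyf : ∀ (x : ℕ), ∑ t ∈ Finset.Icc 1 x, f t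
      = (if n ∈ Finset.Icc 1 x then (1 - ε) else 0)
      + (if n - 1 ∈ Finset.Icc 1 x then ε else 0) := by
    intro x
    have := key x (fun _ => 1)
    simpa using this
  have hn1 : ((n - 1 : ℕ) : ℝ) = (n : ℝ) - 1 := by
    rw [Nat.cast_sub (by omega)]; norm_num
  have hnpos : (0 : ℝ) < (n : ℝ) := by positivity
  have hn1pos : (0 : ℝ) < (n : ℝ) - 1 := by
    have : (3 : ℝ) ≤ (n : ℝ) := by exact_mod_cast hn
    linarith
  -- part 1
  have part1 : ∀ x, 1 ≤ x → x ≤ n - 2 → A x = 1 := by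
    intro x h1 h2
    rw [hA x, key x, keyf x]
    have hnm : n ∉ Finset.Icc 1 x := by simp [Finset.mem_Icc]; omega
    have hnm1 : n - 1 ∉ Finset.Icc 1 x := by simp [Finset.mem_Icc]; omega
    simp [hnm, hnm1]
  -- part 2
  have part2 : A (n - 1) = 1 + ε := by
    rw [hA (n - 1), key (n - 1), keyf (n - 1)]
    have hnm : n ∉ Finset.Icc 1 (n - 1) := by simp [Finset.mem_Icc]; omega
    have hnm1 : n - 1 ∈ Finset.Icc 1 (n - 1) := by simp [Finset.mem_Icc]; omega
    rw [if_neg hnm, if_pos hnm1, if_neg hnm, if_pos hnm1]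
    rw [hn1]
    field_simp
    ring
  -- part 3
  have part3 : A n = 2 - 1/(n:ℝ) - ε/(n:ℝ) := by
    rw [hA n, key n, keyf n]
    have hnm : n ∈ Finset.Icc 1 n := by simp [Finset.mem_Icc]; omega
    have hnm1 : n - 1 ∈ Finset.Icc 1 n := by simp [Finset.mem_Icc]; omega
    rw [if_pos hnm, if_pos hnm1, if_pos hnm, if_pos hnm1, hn1]
    field_simp
    ring
  refine ⟨part1, part2, part3, ?_⟩
  intro hεlt x hx
  rw [Finset.mem_Icc] at hx
  have hinv : 1/(n:ℝ) ≤ 1/3 := by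
    apply one_div_le_one_div_of_le (by norm_num)
    exact_mod_cast hn
  rcases eq_or_ne x n with rfl | hxn
  · rw [part3]
    have := div_pos hε hnpos
    linarith
  · rcases eq_or_ne x (n - 1) with rfl | hxn1
    · rw [part2]; linarith
    · rw [part1 x hx.1 (by omega)]
      linarith
end

section
/- (Constant-ratio exponential extension) Let 1 < a < n, let f be defined on {1,…,a−1} with Σ_{t<a} f_t < 1, and let a ≤ x' ≤ n. Extend f by setting f_a = (1/((a−1)(n−1))) Σ_{t=1}^{a−1} (n+t−1) f_t and f_x = (1 + 1/(n−1))^{x−a} f_a for a ≤ x ≤ x'. Then α_f(x) = α_f(a−1) for all a ≤ x ≤ x'. -/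
/-!
Write `S x = ∑_{t ≤ x} (n + t - 1) f_t`, so that `α_f(x) = S x / x + 1 - ∑_{t ≤ x} f_t`.
If `S x = x (n - 1) f_{x+1}`, then `S (x + 1) = (x + 1) n f_{x+1}` and the two values of `α_f`
coincide, both being `(n - 1) f_{x+1} + 1 - ∑_{t ≤ x} f_t`. The definition of `f_a` is exactly this
invariant at `x = a - 1`, and the ratio `n / (n - 1)` of the geometric extension propagates it.
-/

open Finset

namespace SkiRental

variable (n : ℝ) (f : ℕ → ℝ)

def weightedCost (x : ℕ) : ℝ := ∑ t ∈ Icc 1 x, (n + t - 1) * f t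

noncomputable def alpha (x : ℕ) : ℝ := ∑ t ∈ Icc 1 x, ((n + t - 1) / x) * f t + 1 - ∑ t ∈ Icc 1 x, f t

variable {n f}

lemma alpha_eq (x : ℕ) :
    alpha n f x = weightedCost n f x / x + 1 - ∑ t ∈ Icc 1 x, f t := by
  simp only [alpha, weightedCost, sum_div, div_mul_eq_mul_div]

lemma weightedCost_succ (x : ℕ) :
    weightedCost n f (x + 1) = weightedCost n f x + (n + x) * f (x + 1) := by
  rw [weightedCost, weightedCost, sum_Icc_succ_top (by omega)]
  push_cast
  ring

lemma alpha_succ_eq {x : ℕ} (hx : x ≠ 0)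
    (h : weightedCost n f x = x * (n - 1) * f (x + 1)) :
    alpha n f (x + 1) = alpha n f x := by
  have hsucc : weightedCost n f (x + 1) = (x + 1) * n * f (x + 1) := by
    rw [weightedCost_succ, h]
    ring
  rw [alpha_eq, alpha_eq, hsucc, h, sum_Icc_succ_top (by omega)]
  push_cast
  field_simp
  ring

lemma weightedCost_eq_of_ratio {m N : ℕ}
    (hratio : ∀ x, m < x → x + 1 ≤ N → (n - 1) * f (x + 1) = n * f x)
    (hm : weightedCost n f m = m * (n - 1) * f (m + 1)) :
    ∀ x, m ≤ x → x < N → weightedCost n f x = x * (n - 1) * f (x + 1) := by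
  intro x hmx
  induction x, hmx using Nat.le_induction with
  | base => exact fun _ => hm
  | succ x hmx ih =>
    intro hxN
    rw [weightedCost_succ, ih (by omega)]
    push_cast
    linear_combination (-(x : ℝ) - 1) * hratio (x + 1) (by omega) (by omega)

lemma alpha_eq_of_ratio {m N : ℕ} (hm0 : m ≠ 0)
    (hratio : ∀ x, m < x → x + 1 ≤ N → (n - 1) * f (x + 1) = n * f x)
    (hm : weightedCost n f m = m * (n - 1) * f (m + 1)) :
    ∀ x, m ≤ x → x ≤ N → alpha n f x = alpha n f m := by
  intro x hmx
  induction x, hmx using Nat.le_induction with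
  | base => exact fun _ => rfl
  | succ x hmx ih =>
    intro hxN
    rw [alpha_succ_eq (by omega) (weightedCost_eq_of_ratio hratio hm x hmx (by omega)),
      ih (by omega)]

lemma sub_one_mul_succ_of_geom (hn : n - 1 ≠ 0) {a N : ℕ} {c : ℝ}
    (hf : ∀ x, a ≤ x → x ≤ N → f x = (1 + 1 / (n - 1)) ^ (x - a) * c) :
    ∀ x, a ≤ x → x + 1 ≤ N → (n - 1) * f (x + 1) = n * f x := by
  intro x hax hxN
  rw [hf x hax (by omega), hf (x + 1) (by omega) hxN, Nat.sub_add_comm hax, pow_succ]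
  field_simp
  ring

end SkiRental

open SkiRental in
theorem stmt_8_general (n a x' : ℕ) (ha : 1 < a) (han : a < n)
    (f : ℕ → ℝ)
    (hfa : f a = (1 / (((a:ℝ) - 1) * ((n:ℝ) - 1)))
        * ∑ t ∈ Finset.Icc 1 (a - 1), ((n:ℝ) + t - 1) * f t)
    (hfx : ∀ x, a ≤ x → x ≤ x' → f x = (1 + 1/((n:ℝ) - 1))^(x - a) * f a)
    (A : ℕ → ℝ)
    (hA : ∀ x, A x = ∑ t ∈ Finset.Icc 1 x, (((n:ℝ) + t - 1) / x) * f t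
        + 1 - ∑ t ∈ Finset.Icc 1 x, f t) :
    ∀ x, a ≤ x → x ≤ x' → A x = A (a - 1) := by
  have hn : (n : ℝ) - 1 ≠ 0 := by
    have : (1 : ℝ) < n := by exact_mod_cast ha.trans han
    linarith
  have ha' : (a : ℝ) - 1 ≠ 0 := by
    have : (1 : ℝ) < a := by exact_mod_cast ha
    linarith
  have hA_eq : A = alpha n f := funext hA
  have hm : weightedCost n f (a - 1) = ((a - 1 : ℕ) : ℝ) * (n - 1) * f (a - 1 + 1) := by
    rw [Nat.sub_add_cancel ha.le, Nat.cast_pred (by omega), hfa, weightedCost]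
    field_simp
  have hratio := sub_one_mul_succ_of_geom hn hfx
  intro x hax hxx'
  rw [hA_eq]
  exact alpha_eq_of_ratio (by omega) (fun y hy hyN => hratio y (by omega) hyN) hm x (by omega) hxx'

/-- Constant-ratio exponential extension: extending f from {1,…,a−1} by
f_a = (1/((a−1)(n−1))) Σ_{t<a} (n+t−1) f_t and f_x = (1+1/(n−1))^{x−a} f_a keeps the
expected competitive ratio constant: α_f(x) = α_f(a−1) for all a ≤ x ≤ x'. -/
theorem stmt_8 (n a x' : ℕ) (ha : 1 < a) (han : a < n) (hax : a ≤ x') (hx'n : x' ≤ n)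
    (f : ℕ → ℝ) (hsub : ∑ t ∈ Finset.Icc 1 (a - 1), f t < 1)
    (hfa : f a = (1 / (((a:ℝ) - 1) * ((n:ℝ) - 1)))
        * ∑ t ∈ Finset.Icc 1 (a - 1), ((n:ℝ) + t - 1) * f t)
    (hfx : ∀ x, a ≤ x → x ≤ x' → f x = (1 + 1/((n:ℝ) - 1))^(x - a) * f a)
    (A : ℕ → ℝ)
    (hA : ∀ x, A x = ∑ t ∈ Finset.Icc 1 x, (((n:ℝ) + t - 1) / x) * f t
        + 1 - ∑ t ∈ Finset.Icc 1 x, f t) :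
    ∀ x, a ≤ x → x ≤ x' → A x = A (a - 1) :=
  stmt_8_general n a x' ha han f hfa hfx A hA
end

section
/- With the same setup, the exponential extension is the unique extension keeping the expected competitive ratio constant: if g agrees with f on {1,…,a−1} and α_g(x) = α_g(a−1) for all a ≤ x ≤ x', then g_x = (1 + 1/(n−1))^{x−a} g_a with g_a = (1/((a−1)(n−1))) Σ_{t=1}^{a−1}(n+t−1) g_t, for all a ≤ x ≤ x'. -/
/-!
Comparing consecutive ratios, `α_g(y + 1) = α_g(y)` is equivalent to
`y (n - 1) g_{y+1} = Σ_{t ≤ y} (n + t - 1) g_t`. Taken at `y = a - 1` this is the formula for `g_a`;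
subtracting two consecutive instances gives `(y + 1)(n - 1) g_{y+2} = (y + 1) n g_{y+1}`,
so from `a` on the weights grow geometrically with ratio `n / (n - 1)`.
-/

open Finset

theorem eq_pow_sub_mul_of_succ_eq_mul {M : Type*} [Monoid M] {f : ℕ → M} {r : M} {a b : ℕ}
    (h : ∀ k, a ≤ k → k < b → f (k + 1) = r * f k) :
    ∀ x, a ≤ x → x ≤ b → f x = r ^ (x - a) * f a := by
  intro x hax
  induction x, hax using Nat.le_induction with
  | base => simp
  | succ k hak ih =>
    intro hkb
    rw [h k hak hkb, ih (Nat.le_of_succ_le hkb), Nat.succ_sub hak, pow_succ', mul_assoc]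

/-- Buying on day `t` costs `n + t - 1`. -/
def buyCost (n : ℕ) (g : ℕ → ℝ) (x : ℕ) : ℝ :=
  ∑ t ∈ Icc 1 x, ((n : ℝ) + t - 1) * g t

theorem buyCost_succ (n : ℕ) (g : ℕ → ℝ) (y : ℕ) :
    buyCost n g (y + 1) = buyCost n g y + ((n : ℝ) + y) * g (y + 1) := by
  rw [buyCost, sum_Icc_succ_top (by omega), ← buyCost]
  push_cast
  ring

theorem sum_div_mul_eq_buyCost_div (n : ℕ) (g : ℕ → ℝ) (x : ℕ) :
    ∑ t ∈ Icc 1 x, (((n : ℝ) + t - 1) / x) * g t = buyCost n g x / x := by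
  rw [buyCost, sum_div]
  exact sum_congr rfl fun t _ => by ring

theorem mul_eq_buyCost_of_ratio_succ_eq {n : ℕ} {g : ℕ → ℝ} {y : ℕ} (hy : y ≠ 0)
    (h : buyCost n g (y + 1) / (y + 1 : ℕ) + 1 - ∑ t ∈ Icc 1 (y + 1), g t
      = buyCost n g y / y + 1 - ∑ t ∈ Icc 1 y, g t) :
    g (y + 1) * (y * ((n : ℝ) - 1)) = buyCost n g y := by
  rw [buyCost_succ, sum_Icc_succ_top (by omega)] at h
  have hy' : (y : ℝ) ≠ 0 := by exact_mod_cast hy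
  push_cast at h
  field_simp at h
  linear_combination h

theorem succ_succ_eq_mul_of_mul_eq_buyCost {n : ℕ} {g : ℕ → ℝ} {y : ℕ} (hn : (n : ℝ) - 1 ≠ 0)
    (h₁ : g (y + 1) * (y * ((n : ℝ) - 1)) = buyCost n g y)
    (h₂ : g (y + 2) * ((y + 1 : ℕ) * ((n : ℝ) - 1)) = buyCost n g (y + 1)) :
    g (y + 2) = (1 + 1 / ((n : ℝ) - 1)) * g (y + 1) := by
  rw [buyCost_succ, ← h₁] at h₂
  push_cast at h₂
  have hy : (y : ℝ) + 1 ≠ 0 := by positivity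
  field_simp
  apply mul_left_cancel₀ hy
  linear_combination h₂

theorem stmt_9_general (n a x' : ℕ) (ha : 1 < a) (han : a < n) (hax : a ≤ x')
    (g : ℕ → ℝ)
    (A : ℕ → ℝ)
    (hA : ∀ x, A x = ∑ t ∈ Finset.Icc 1 x, (((n:ℝ) + t - 1) / x) * g t
        + 1 - ∑ t ∈ Finset.Icc 1 x, g t)
    (hconst : ∀ x, a ≤ x → x ≤ x' → A x = A (a - 1)) :
    g a = (1 / (((a:ℝ) - 1) * ((n:ℝ) - 1)))
        * ∑ t ∈ Finset.Icc 1 (a - 1), ((n:ℝ) + t - 1) * g t ∧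
    ∀ x, a ≤ x → x ≤ x' → g x = (1 + 1/((n:ℝ) - 1))^(x - a) * g a := by
  have hn : (n : ℝ) - 1 ≠ 0 := sub_ne_zero.2 (by exact_mod_cast (by omega : n ≠ 1))
  have hstep : ∀ y, a ≤ y + 1 → y + 1 ≤ x' → g (y + 1) * (y * ((n : ℝ) - 1)) = buyCost n g y := by
    intro y hay hyx
    have hA_eq : A (y + 1) = A y := by
      rw [hconst _ hay hyx]
      rcases hay.eq_or_lt with rfl | hlt
      · rfl
      · exact (hconst y (by omega) (by omega)).symm
    simp only [hA, sum_div_mul_eq_buyCost_div] at hA_eq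
    exact mul_eq_buyCost_of_ratio_succ_eq (by omega) hA_eq
  refine ⟨?_, eq_pow_sub_mul_of_succ_eq_mul fun k hak hkx => ?_⟩
  · have h := hstep (a - 1) (by omega) (by omega)
    rw [Nat.sub_add_cancel ha.le, Nat.cast_sub ha.le, Nat.cast_one] at h
    have ha' : (a : ℝ) - 1 ≠ 0 := sub_ne_zero.2 (by exact_mod_cast ha.ne')
    rw [← buyCost, ← h]
    field_simp
  · obtain ⟨y, rfl⟩ : ∃ y, k = y + 1 := ⟨k - 1, by omega⟩
    exact succ_succ_eq_mul_of_mul_eq_buyCost hn (hstep y hak hkx.le) (hstep (y + 1) (by omega) hkx)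

/-- Uniqueness of the constant-ratio extension: if α_g(x) = α_g(a−1) for all a ≤ x ≤ x',
then g_a = (1/((a−1)(n−1))) Σ_{t<a} (n+t−1) g_t and g_x = (1+1/(n−1))^{x−a} g_a. -/
theorem stmt_9 (n a x' : ℕ) (ha : 1 < a) (han : a < n) (hax : a ≤ x') (hx'n : x' ≤ n)
    (g : ℕ → ℝ) (hsub : ∑ t ∈ Finset.Icc 1 (a - 1), g t < 1)
    (A : ℕ → ℝ)
    (hA : ∀ x, A x = ∑ t ∈ Finset.Icc 1 x, (((n:ℝ) + t - 1) / x) * g t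
        + 1 - ∑ t ∈ Finset.Icc 1 x, g t)
    (hconst : ∀ x, a ≤ x → x ≤ x' → A x = A (a - 1)) :
    g a = (1 / (((a:ℝ) - 1) * ((n:ℝ) - 1)))
        * ∑ t ∈ Finset.Icc 1 (a - 1), ((n:ℝ) + t - 1) * g t ∧
    ∀ x, a ≤ x → x ≤ x' → g x = (1 + 1/((n:ℝ) - 1))^(x - a) * g a :=
  stmt_9_general n a x' ha han hax g A hA hconst
end

section
/- Suppose a (sub)probability function f on {1,…,n} satisfies, for each 0 ≤ j' ≤ j, Σ_{t ∈ P_{j'}} f_t ≤ δ, where P_{j'} are the disjoint intervals defined by ℓ, r, and suppose f_t = 0 outside ∪_{j'≤j} P_{j'} ∩ [1, t]. Then for any t ∈ P_j with δ < 1/(2γ(i+1)) and j ≤ i and t ≥ n/γ: α_f(t) = 1 + Σ_{t'≤t} ((n+t'−1−t)/t) f_{t'} ≤ 1 + (j+1)·((n−1)/t)·δ < 3/2. -/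
/-!
Every weight `(n + t' - 1 - t) / t` with `t' ≤ t` is at most `(n - 1) / t`, and the total mass of
`f` on `[1, t]` is at most `(j + 1) δ`, since `f` lives on the `j + 1` intervals `P_0, …, P_j`.
For the second bound, `t ≥ n / γ` gives `(n - 1) / t ≤ γ`, so the correction is at most
`(i + 1) γ δ < 1 / 2`.
-/

open Finset

section
variable {ι α β : Type*} [DecidableEq α] [AddCommMonoid β] [PartialOrder β]
  [IsOrderedAddMonoid β] {f : α → β}

theorem Finset.sum_union_le_of_nonneg (hf : ∀ x, 0 ≤ f x) (s t : Finset α) :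
    ∑ x ∈ s ∪ t, f x ≤ ∑ x ∈ s, f x + ∑ x ∈ t, f x := by
  rw [← sum_union_inter]
  exact le_add_of_nonneg_right (sum_nonneg fun x _ ↦ hf x)

theorem Finset.sum_biUnion_le_of_nonneg (hf : ∀ x, 0 ≤ f x) (K : Finset ι) (P : ι → Finset α) :
    ∑ x ∈ K.biUnion P, f x ≤ ∑ k ∈ K, ∑ x ∈ P k, f x := by
  rw [← sup_eq_biUnion]
  exact K.apply_sup_le_sum (f := fun A ↦ ∑ x ∈ A, f x) sum_empty
    (sum_union_le_of_nonneg hf _ _)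

theorem Finset.sum_le_card_nsmul_of_eq_zero_off_biUnion (hf : ∀ x, 0 ≤ f x) {s : Finset α}
    {K : Finset ι} {P : ι → Finset α} {δ : β} (hP : ∀ k ∈ K, ∑ x ∈ P k, f x ≤ δ)
    (hzero : ∀ x ∈ s, x ∉ K.biUnion P → f x = 0) :
    ∑ x ∈ s, f x ≤ #K • δ :=
  calc ∑ x ∈ s, f x = ∑ x ∈ s with x ∈ K.biUnion P, f x :=
        (sum_filter_of_ne fun x hx hfx ↦ not_not.mp fun h ↦ hfx (hzero x hx h)).symm
    _ ≤ ∑ x ∈ K.biUnion P, f x :=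
        sum_le_sum_of_subset_of_nonneg (fun _ hx ↦ (mem_filter.mp hx).2) fun x _ _ ↦ hf x
    _ ≤ ∑ k ∈ K, ∑ x ∈ P k, f x := sum_biUnion_le_of_nonneg hf K P
    _ ≤ #K • δ := sum_le_card_nsmul K _ δ hP
end

theorem mul_mul_lt_half_of_lt_inv {a b c γ δ : ℝ} (hab : a ≤ b) (hb : 0 < b) (hc : 0 ≤ c)
    (hcγ : c ≤ γ) (hγ : 0 < γ) (hδ₀ : 0 ≤ δ) (hδ : δ < 1 / (2 * γ * b)) : a * c * δ < 1 / 2 :=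
  calc a * c * δ ≤ b * γ * δ := by gcongr
    _ < b * γ * (1 / (2 * γ * b)) := by gcongr
    _ = 1 / 2 := by field_simp

theorem sum_Icc_div_mul_le_div_mul_sum (n : ℝ) (t : ℕ) {f : ℕ → ℝ} (hf : ∀ x, 0 ≤ f x) :
    ∑ t' ∈ Icc 1 t, ((n + t' - 1 - t) / t) * f t' ≤ ((n - 1) / t) * ∑ t' ∈ Icc 1 t, f t' := by
  rw [mul_sum]
  refine sum_le_sum fun x hx ↦ mul_le_mul_of_nonneg_right ?_ (hf x)
  have : (x : ℝ) ≤ t := by exact_mod_cast (mem_Icc.mp hx).2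
  exact div_le_div_of_nonneg_right (by linarith) t.cast_nonneg

theorem stmt_15_general (n γ m : ℕ) (hγ : 2 ≤ γ) (hnm : n - 1 = γ^m)
    (ℓ r : ℕ → ℕ)
    (i j : ℕ) (hji : j ≤ i)
    (δ : ℝ) (hδ : δ < 1/(2*(γ:ℝ)*((i:ℝ) + 1)))
    (f : ℕ → ℝ) (hf : ∀ t, 0 ≤ f t)
    (hmass : ∀ j' : ℕ, j' ≤ j → ∑ t ∈ Finset.Icc (ℓ j') (r j'), f t ≤ δ)
    (t : ℕ) (htn : (n:ℝ)/(γ:ℝ) ≤ (t:ℝ))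
    (hsupp : ∀ t', 1 ≤ t' → t' ≤ t →
      (∀ j' : ℕ, j' ≤ j → t' ∉ Finset.Icc (ℓ j') (r j')) → f t' = 0) :
    1 + ∑ t' ∈ Finset.Icc 1 t, (((n:ℝ) + t' - 1 - t)/t) * f t'
        ≤ 1 + ((j:ℝ) + 1) * (((n:ℝ) - 1)/t) * δ ∧
    1 + ((j:ℝ) + 1) * (((n:ℝ) - 1)/t) * δ < 3/2 := by
  have hn : (1 : ℝ) ≤ n := by
    have : 1 ≤ γ ^ m := Nat.one_le_pow _ _ (by omega)
    exact_mod_cast (by omega : 1 ≤ n)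
  have hγ₀ : (0 : ℝ) < γ := by positivity
  have hδ₀ : 0 ≤ δ := (sum_nonneg fun x _ ↦ hf x).trans (hmass j le_rfl)
  have hc₀ : 0 ≤ ((n : ℝ) - 1) / t := div_nonneg (by linarith) t.cast_nonneg
  have hcγ : ((n : ℝ) - 1) / t ≤ γ := by
    rw [div_le_iff₀ hγ₀] at htn
    exact div_le_of_le_mul₀ t.cast_nonneg hγ₀.le (by linarith)
  have hmass_le : ∑ t' ∈ Icc 1 t, f t' ≤ ((j : ℝ) + 1) * δ := by
    have := sum_le_card_nsmul_of_eq_zero_off_biUnion hf (s := Icc 1 t) (K := range (j + 1))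
      (fun k hk ↦ hmass k (Nat.lt_succ_iff.mp (mem_range.mp hk))) fun x hx hxP ↦
        hsupp x (mem_Icc.mp hx).1 (mem_Icc.mp hx).2 fun k hk hxk ↦
          hxP (mem_biUnion.mpr ⟨k, mem_range.mpr (Nat.lt_succ_of_le hk), hxk⟩)
    simpa [nsmul_eq_mul] using this
  have hji' : (j : ℝ) + 1 ≤ (i : ℝ) + 1 := by exact_mod_cast Nat.succ_le_succ hji
  constructor
  · calc 1 + ∑ t' ∈ Icc 1 t, ((n + t' - 1 - t : ℝ) / t) * f t'
        ≤ 1 + ((n - 1 : ℝ) / t) * ∑ t' ∈ Icc 1 t, f t' := by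
          grw [sum_Icc_div_mul_le_div_mul_sum _ _ hf]
      _ ≤ 1 + ((n - 1 : ℝ) / t) * (((j : ℝ) + 1) * δ) := by gcongr
      _ = 1 + ((j : ℝ) + 1) * (((n : ℝ) - 1) / t) * δ := by ring
  · linarith [mul_mul_lt_half_of_lt_inv hji' (by positivity) hc₀ hcγ hγ₀ hδ₀ hδ]

/-- If f has mass at most δ in each interval P_{j'} (j' ≤ j) and vanishes outside them on
[1, t], then for t ∈ P_j with t ≥ n/γ, δ < 1/(2γ(i+1)) and j ≤ i:
α_f(t) = 1 + Σ_{t'≤t} ((n+t'−1−t)/t) f_{t'} ≤ 1 + (j+1)((n−1)/t)δ < 3/2. -/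
theorem stmt_15 (n γ m : ℕ) (hγ : 2 ≤ γ) (hnm : n - 1 = γ^m)
    (ℓ r : ℕ → ℕ)
    (hℓ : ∀ j : ℕ, j + 1 ≤ m →
      ((ℓ j : ℝ)) = ((n:ℝ) - 1)/((γ:ℝ) - 1) * (1 - (γ:ℝ)^(-(j:ℤ))) + 1)
    (hr : ∀ j : ℕ, j + 1 ≤ m →
      ((r j : ℝ)) = ((n:ℝ) - 1)/((γ:ℝ) - 1) * (1 - (γ:ℝ)^(-(j:ℤ) - 1)))
    (i j : ℕ) (hji : j ≤ i) (hjm : j + 1 ≤ m)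
    (δ : ℝ) (hδ : δ < 1/(2*(γ:ℝ)*((i:ℝ) + 1)))
    (f : ℕ → ℝ) (hf : ∀ t, 0 ≤ f t)
    (hmass : ∀ j' : ℕ, j' ≤ j → ∑ t ∈ Finset.Icc (ℓ j') (r j'), f t ≤ δ)
    (t : ℕ) (ht : t ∈ Finset.Icc (ℓ j) (r j)) (htn : (n:ℝ)/(γ:ℝ) ≤ (t:ℝ))
    (hsupp : ∀ t', 1 ≤ t' → t' ≤ t →
      (∀ j' : ℕ, j' ≤ j → t' ∉ Finset.Icc (ℓ j') (r j')) → f t' = 0) :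
    1 + ∑ t' ∈ Finset.Icc 1 t, (((n:ℝ) + t' - 1 - t)/t) * f t'
        ≤ 1 + ((j:ℝ) + 1) * (((n:ℝ) - 1)/t) * δ ∧
    1 + ((j:ℝ) + 1) * (((n:ℝ) - 1)/t) * δ < 3/2 :=
  stmt_15_general n γ m hγ hnm ℓ r i j hji δ hδ f hf hmass t htn hsupp
end

section
/- (Pure tail constraint optimum) Suppose there is a single tail constraint (γ, 0) with (γ−1) | (n−1), and let t₁ = (n−1)/(γ−1). If f is a probability distribution with f_t = 0 for t < t₁, f_{t₁} = (λ−1)/(γ−1), and f_t = (γ(λ−1)/((n−1)(γ−1)))·(1+1/(n−1))^{t−t₁−1} for t > t₁, then the normalization Σ_t f_t = 1 forces λ = 1 + (γ−1)/(1 + (γ/(n−1))·(n·((n/(n−1))^{(n−1)(1−1/(γ−1))} − 1) + 1)). -/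
/-! Only `t₁` and the tail `t₁ < t ≤ n` carry mass; the tail is geometric with ratio
`1 + 1/(n-1) = n/(n-1)`, so the total mass is `(λ-1)/(γ-1) · D` with `D` the stated denominator,
and normalization is a linear equation in `λ - 1`. -/

open Finset

theorem sum_Icc_eq_add_sum_range_of_eq_zero_of_lt {M : Type*} [AddCommMonoid M] {f : ℕ → M}
    {t₁ n : ℕ} (ht₁ : 1 ≤ t₁) (hn : t₁ ≤ n) (hf0 : ∀ t < t₁, f t = 0) :
    ∑ t ∈ Icc 1 n, f t = f t₁ + ∑ i ∈ range (n - t₁), f (t₁ + 1 + i) := by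
  rw [← Ico_add_one_right_eq_Icc, ← sum_Ico_consecutive f ht₁ (by omega : t₁ ≤ n + 1),
    sum_eq_zero fun t ht => hf0 t (mem_Ico.1 ht).2, zero_add,
    sum_eq_sum_Ico_succ_bot (by omega), sum_Ico_eq_sum_range, Nat.add_sub_add_right]

theorem geom_sum_one_add_one_div_sub_one {a : ℝ} (ha : a ≠ 1) (m : ℕ) :
    ∑ i ∈ range (m + 1), (1 + 1 / (a - 1)) ^ i = a * ((a / (a - 1)) ^ m - 1) + 1 := by
  have ha' : a - 1 ≠ 0 := sub_ne_zero.2 ha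
  have hr : 1 + 1 / (a - 1) = a / (a - 1) := by field_simp; ring
  have hr1 : a / (a - 1) ≠ 1 := by
    rw [ne_eq, div_eq_one_iff_eq ha']
    intro h; linarith
  rw [hr, geom_sum_eq hr1, pow_succ]
  field_simp
  ring

/-- Pure tail constraint (γ, 0): if f is the distribution that is 0 before t₁ = (n−1)/(γ−1),
equals (λ−1)/(γ−1) at t₁, and grows geometrically after t₁, then Σ f = 1 forces
λ = 1 + (γ−1)/(1 + (γ/(n−1))·(n·((n/(n−1))^{(n−1)(1−1/(γ−1))} − 1) + 1)). -/
theorem stmt_18 (n γ : ℕ) (hn : 2 ≤ n) (hγ : 2 ≤ γ) (hdvd : (γ - 1) ∣ (n - 1))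
    (t₁ : ℕ) (ht₁ : t₁ = (n - 1)/(γ - 1)) (lam : ℝ)
    (f : ℕ → ℝ)
    (hf0 : ∀ t, t < t₁ → f t = 0)
    (hft₁ : f t₁ = (lam - 1)/((γ:ℝ) - 1))
    (hft : ∀ t, t₁ < t →
      f t = ((γ:ℝ)*(lam - 1)/(((n:ℝ) - 1)*((γ:ℝ) - 1))) * (1 + 1/((n:ℝ) - 1))^(t - t₁ - 1))
    (hsum : ∑ t ∈ Finset.Icc 1 n, f t = 1) :
    lam = 1 + ((γ:ℝ) - 1) /
      (1 + ((γ:ℝ)/((n:ℝ) - 1))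
        * ((n:ℝ)*(((n:ℝ)/((n:ℝ) - 1))^(n - 1 - t₁) - 1) + 1)) := by
  have ht₁_pos : 1 ≤ t₁ := ht₁ ▸ Nat.div_pos (Nat.le_of_dvd (by omega) hdvd) (by omega)
  have ht₁_le : t₁ ≤ n - 1 := ht₁ ▸ Nat.div_le_self _ _
  have hn1 : (n : ℝ) - 1 ≠ 0 := by
    rw [sub_ne_zero]; exact_mod_cast (by omega : n ≠ 1)
  have hγ1 : (γ : ℝ) - 1 ≠ 0 := by
    rw [sub_ne_zero]; exact_mod_cast (by omega : γ ≠ 1)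
  set D := 1 + ((γ:ℝ)/((n:ℝ) - 1)) * ((n:ℝ)*(((n:ℝ)/((n:ℝ) - 1))^(n - 1 - t₁) - 1) + 1) with hD_def
  have hD : (lam - 1) / ((γ:ℝ) - 1) * D = 1 := by
    rw [sum_Icc_eq_add_sum_range_of_eq_zero_of_lt ht₁_pos (by omega) hf0, hft₁,
      sum_congr rfl fun i _ => hft (t₁ + 1 + i) (by omega), ← mul_sum,
      (by omega : n - t₁ = n - 1 - t₁ + 1)] at hsum
    simp only [(by omega : ∀ i, t₁ + 1 + i - t₁ - 1 = i)] at hsum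
    rw [geom_sum_one_add_one_div_sub_one (sub_ne_zero.1 hn1) _] at hsum
    refine Eq.trans ?_ hsum
    rw [hD_def]
    field_simp
  have hlam := eq_one_div_of_mul_eq_one_left hD
  rw [div_eq_iff hγ1, one_div_mul_eq_div] at hlam
  linarith
end

section
/- As n → ∞, the optimal competitive ratio under a single pure tail constraint (γ, 0), given by λ(n) = 1 + (γ−1)/(1 + (γ/(n−1))·(n·((n/(n−1))^{(n−1)(1−1/(γ−1))} − 1) + 1)), converges to 1 + (γ−1)/(1 + γ(e^{1−1/(γ−1)} − 1)). In particular, for γ = 2 the limit is 2, and the limit as γ → ∞ of the limiting expression is e/(e−1). -/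
/-!
Substituting `y = n - 1` turns `n / (n - 1)` into `1 + 1 / y`, so the power in the denominator tends
to `e ^ c` with `c = 1 - 1 / (γ - 1)`, while the remaining factors tend to `1` and `0`; the
denominator of the limit is positive because `c ≥ 0` for `γ ≥ 2`. For `γ → ∞`, dividing numerator
and denominator by `γ` gives `1 + 1 / (e - 1) = e / (e - 1)`.
-/

open Filter Real Topology

lemma tendsto_one_add_inv_rpow_mul (c : ℝ) :
    Tendsto (fun y : ℝ => (1 + y⁻¹) ^ (y * c)) atTop (𝓝 (exp c)) := by
  have hpow : Tendsto (fun y : ℝ => ((1 + y⁻¹) ^ y) ^ c) atTop (𝓝 (exp c)) := by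
    rw [← exp_one_rpow c]
    refine (continuousAt_rpow_const _ c (Or.inl (exp_pos 1).ne')).tendsto.comp ?_
    simpa [one_div] using tendsto_one_add_div_rpow_exp 1
  refine hpow.congr' ?_
  filter_upwards [eventually_gt_atTop 0] with y hy
  rw [← rpow_mul (by positivity)]

/-- The denominator of the competitive ratio written in `y = n - 1`, where `n / (n - 1) = 1 + y⁻¹`. -/
lemma tendsto_ratio_denominator (γ c : ℝ) :
    Tendsto (fun y : ℝ => 1 + γ * ((1 + y⁻¹) * ((1 + y⁻¹) ^ (y * c) - 1) + y⁻¹)) atTop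
      (𝓝 (1 + γ * (exp c - 1))) := by
  have hinv := tendsto_inv_atTop_zero (𝕜 := ℝ)
  have h := tendsto_const_nhds (x := (1 : ℝ)).add <| tendsto_const_nhds (x := γ).mul <|
    ((tendsto_const_nhds (x := (1 : ℝ)).add hinv).mul
      ((tendsto_one_add_inv_rpow_mul c).sub_const 1)).add hinv
  simpa using h

lemma tendsto_ratio_of_ne_zero {γ c : ℝ} (h : 1 + γ * (exp c - 1) ≠ 0) :
    Tendsto (fun x : ℝ =>
        1 + (γ - 1) / (1 + γ / (x - 1) * (x * ((x / (x - 1)) ^ ((x - 1) * c) - 1) + 1)))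
      atTop (𝓝 (1 + (γ - 1) / (1 + γ * (exp c - 1)))) := by
  have hD := (tendsto_ratio_denominator γ c).comp (tendsto_atTop_add_const_right _ (-1) tendsto_id)
  refine tendsto_const_nhds.add (tendsto_const_nhds.div (hD.congr' ?_) h)
  filter_upwards [eventually_gt_atTop 1] with x hx
  have hx1 : x - 1 ≠ 0 := by linarith
  have hfrac : x / (x - 1) = 1 + (x - 1)⁻¹ := by field_simp; ring
  simp only [Function.comp_apply, id, ← sub_eq_add_neg, ← hfrac]
  field_simp

lemma one_add_mul_exp_sub_one_pos {γ c : ℝ} (hγ : 0 ≤ γ) (hc : 0 ≤ c) :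
    0 < 1 + γ * (exp c - 1) := by
  have : 0 ≤ exp c - 1 := by linarith [one_le_exp hc]
  positivity

lemma tendsto_ratio_limit_atTop :
    Tendsto (fun g : ℝ => 1 + (g - 1) / (1 + g * (exp (1 - 1 / (g - 1)) - 1))) atTop
      (𝓝 (exp 1 / (exp 1 - 1))) := by
  have hinv := tendsto_inv_atTop_zero (𝕜 := ℝ)
  have hexp : Tendsto (fun g : ℝ => exp (1 - 1 / (g - 1))) atTop (𝓝 (exp 1)) := by
    have h0 : Tendsto (fun g : ℝ => 1 / (g - 1)) atTop (𝓝 0) := by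
      simpa [one_div, Function.comp_def, sub_eq_add_neg] using
        hinv.comp (tendsto_atTop_add_const_right _ (-1) tendsto_id)
    have h1 := h0.const_sub 1
    rw [sub_zero] at h1
    exact (continuous_exp.tendsto 1).comp h1
  have he : exp 1 - 1 ≠ 0 := by linarith [add_one_lt_exp one_ne_zero]
  have h := tendsto_const_nhds (x := (1 : ℝ)).add <|
    (hinv.const_sub 1).div (hinv.add (hexp.sub_const 1)) (by simpa using he)
  rw [sub_zero, zero_add, one_add_div he, sub_add_cancel] at h
  refine h.congr' ?_
  filter_upwards [eventually_gt_atTop 0] with g hg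
  rw [Pi.div_apply, ← mul_div_mul_left (1 - g⁻¹) _ hg.ne']
  congr 2 <;> field_simp

/-- The optimal pure-tail-constraint competitive ratio λ(n) converges as n → ∞ to
1 + (γ−1)/(1 + γ(e^{1−1/(γ−1)} − 1)); for γ = 2 the limit is 2, and as γ → ∞ the
limiting expression tends to e/(e−1). -/
theorem stmt_19 (γ : ℝ) (hγ : 2 ≤ γ) :
    Tendsto (fun n : ℕ => 1 + (γ - 1) /
        (1 + (γ/((n:ℝ) - 1))
          * ((n:ℝ)*(((n:ℝ)/((n:ℝ) - 1)) ^ (((n:ℝ) - 1)*(1 - 1/(γ - 1))) - 1) + 1)))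
      atTop (nhds (1 + (γ - 1)/(1 + γ*(Real.exp (1 - 1/(γ - 1)) - 1)))) ∧
    (γ = 2 → 1 + (γ - 1)/(1 + γ*(Real.exp (1 - 1/(γ - 1)) - 1)) = 2) ∧
    Tendsto (fun g : ℝ => 1 + (g - 1)/(1 + g*(Real.exp (1 - 1/(g - 1)) - 1)))
      atTop (nhds (Real.exp 1 / (Real.exp 1 - 1))) := by
  have hc : 0 ≤ 1 - 1 / (γ - 1) := by
    rw [sub_nonneg, div_le_one (by linarith)]
    linarith
  refine ⟨?_, fun h => by subst h; norm_num, tendsto_ratio_limit_atTop⟩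
  exact (tendsto_ratio_of_ne_zero (one_add_mul_exp_sub_one_pos (by linarith) hc).ne').comp
    tendsto_natCast_atTop_atTop
end
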